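/- Let λ ∈ ℝⁿ with ‖λ‖₁ = 1 and let s ∈ ℝ. The closed half-space H(λ, s) := {y ∈ ℝⁿ : λᵀ y ≤ s} supports F if and only if λ ∈ Λ₁ and s = ‖φ(λ)‖_{h(λ)}²; in that case, cl F ∩ {y : λᵀ y = s} = {P_c(φ(λ))}, i.e. P_c(φ(λ)) is the unique point of support. Moreover, H(λ, s) supports F if and only if it supports the image P_c(ℝⁿ) = {P_c(x) : x ∈ ℝⁿ}, and in that case cl(P_c(ℝⁿ)) ∩ {y : λᵀ y = s} = {P_c(φ(λ))}. -/

import Mathlib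

open Matrix Set

noncomputable section

/-- `A` is irreducible: for every nonempty proper subset `α` of the index set,
the submatrix `A[α, αᶜ]` is not the zero matrix. -/
def IsIrred {k : ℕ} (A : Matrix (Fin k) (Fin k) ℝ) : Prop :=
  ∀ α : Finset (Fin k), α.Nonempty → α ≠ Finset.univ → ∃ i ∈ α, ∃ j ∈ αᶜ, A i j ≠ 0

/-- `A` is a Z-matrix: off-diagonal entries are nonpositive. -/
def IsZmat {k : ℕ} (A : Matrix (Fin k) (Fin k) ℝ) : Prop :=
  ∀ i j, i ≠ j → A i j ≤ 0

/-- `A` is an M-matrix: a Z-matrix all of whose eigenvalues have nonnegative real part. -/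
def IsMmat {k : ℕ} (A : Matrix (Fin k) (Fin k) ℝ) : Prop :=
  IsZmat A ∧ ∀ μ ∈ spectrum ℂ (A.map (Complex.ofReal)), 0 ≤ μ.re

/-- `A` is a nonsingular M-matrix: a Z-matrix all of whose eigenvalues have positive real part. -/
def IsNonsingMmat {k : ℕ} (A : Matrix (Fin k) (Fin k) ℝ) : Prop :=
  IsZmat A ∧ ∀ μ ∈ spectrum ℂ (A.map (Complex.ofReal)), 0 < μ.re

/-- `P_c(x) = [x] Y (V* − x)`. -/
def Pc {k : ℕ} (Y : Matrix (Fin k) (Fin k) ℝ) (Vs : Fin k → ℝ) (x : Fin k → ℝ) : Fin k → ℝ :=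
  Matrix.diagonal x *ᵥ (Y *ᵥ (Vs - x))

/-- Jacobian of `P_c` at `x`: `J(x) = [Y(V* − x)] − [x] Y`. -/
def Jmat {k : ℕ} (Y : Matrix (Fin k) (Fin k) ℝ) (Vs : Fin k → ℝ) (x : Fin k → ℝ) :
    Matrix (Fin k) (Fin k) ℝ :=
  Matrix.diagonal (Y *ᵥ (Vs - x)) - Matrix.diagonal x * Y

/-- long-term voltage stable operating points. -/
def Dset {k : ℕ} (Y : Matrix (Fin k) (Fin k) ℝ) (Vs : Fin k → ℝ) : Set (Fin k → ℝ) :=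
  {x | (∀ i, 0 < x i) ∧ IsUnit (Jmat Y Vs x).det ∧ ∀ i j, (Jmat Y Vs x)⁻¹ i j < 0}

/-- feasible power demands. -/
def Fset {k : ℕ} (Y : Matrix (Fin k) (Fin k) ℝ) (Vs : Fin k → ℝ) : Set (Fin k → ℝ) :=
  {P | ∃ x, (∀ i, 0 < x i) ∧ Pc Y Vs x = P}

/-- `h(λ) = (1/2)([λ] Y + Y [λ])`. -/
def hmat {k : ℕ} (Y : Matrix (Fin k) (Fin k) ℝ) (l : Fin k → ℝ) : Matrix (Fin k) (Fin k) ℝ :=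
  (1/2 : ℝ) • (Matrix.diagonal l * Y + Y * Matrix.diagonal l)

/-- `Λ₁ = {λ ∈ Λ : λ > 0, 1ᵀλ = 1}`. -/
def Lam1 {k : ℕ} (Y : Matrix (Fin k) (Fin k) ℝ) : Set (Fin k → ℝ) :=
  {l | (hmat Y l).PosDef ∧ (∀ i, 0 < l i) ∧ ∑ i, l i = 1}

/-- `φ(λ) = (1/2) h(λ)⁻¹ [λ] I*` where `I* = Y V*`. -/
def phiv {k : ℕ} (Y : Matrix (Fin k) (Fin k) ℝ) (Vs : Fin k → ℝ) (l : Fin k → ℝ) : Fin k → ℝ :=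
  (1/2 : ℝ) • ((hmat Y l)⁻¹ *ᵥ (Matrix.diagonal l *ᵥ (Y *ᵥ Vs)))

/-- `‖x‖_{h(λ)}²  = xᵀ h(λ) x`. -/
def qnorm {k : ℕ} (Y : Matrix (Fin k) (Fin k) ℝ) (l x : Fin k → ℝ) : ℝ :=
  x ⬝ᵥ (hmat Y l *ᵥ x)

/-- The half-space `H_λ`. -/
def Hset {k : ℕ} (Y : Matrix (Fin k) (Fin k) ℝ) (Vs : Fin k → ℝ) (l : Fin k → ℝ) :
    Set (Fin k → ℝ) :=
  {y | l ⬝ᵥ y ≤ qnorm Y l (phiv Y Vs l)}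

/-- The closed half-space `H(ν, s)` supports `S`. -/
def Supports {k : ℕ} (ν : Fin k → ℝ) (s : ℝ) (S : Set (Fin k → ℝ)) : Prop :=
  S ⊆ {y | ν ⬝ᵥ y ≤ s} ∧ (closure S ∩ {y | ν ⬝ᵥ y = s}).Nonempty

/-!
Write `c = [λ] I*`. For symmetric `Y`, `λ ⬝ᵥ P_c(x) = x ⬝ᵥ c - ‖x‖²_{h(λ)}`. When `h(λ)` is positive
definite, completing the square gives `λ ⬝ᵥ P_c(x) = ‖φ(λ)‖²_{h(λ)} - ‖x - φ(λ)‖²_{h(λ)}`, so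
`λ ⬝ᵥ P_c` attains its supremum over `ℝⁿ` exactly at `φ(λ)`. Since `h(λ)` is then a Z-matrix and
`c ≥ 0`, `|φ(λ)|` does at least as well as `φ(λ)`, so `φ(λ) ≥ 0` and `P_c(φ(λ))` is a limit of
feasible points. Coercivity of `‖·‖_{h(λ)}` makes `P_c(φ(λ))` the only contact point.

Conversely, if `λ ⬝ᵥ P_c` is bounded above on the positive orthant, it is bounded along every ray
`u + t v` with `u > 0`, `v ≥ 0`, so the coefficient of `t²`, namely `-‖v‖²_{h(λ)}`, is `≤ 0`, and
the coefficient of `t` is `≤ 0` when it vanishes. The rays `V* + t eᵢ` give `λ ≥ 0`, and then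
irreducibility gives `λ > 0`. The rays `1 + t |v|` make `h(λ)` positive semidefinite; a null vector
`v` would give a kernel vector `|v|`, positive by irreducibility, along which `λ ⬝ᵥ P_c` grows
linearly.
-/

open Filter Topology

lemma coeff_signs_of_forall_quadratic_le {a b c s : ℝ}
    (h : ∀ t : ℝ, 0 ≤ t → a + b * t - c * t ^ 2 ≤ s) : 0 ≤ c ∧ (c = 0 → b ≤ 0) := by
  refine ⟨?_, fun hc => ?_⟩
  · by_contra! hc
    set T := |a| + |b| + |s| + 1
    have hT : 0 < T := by positivity
    set t := T / -c + 1
    have ht1 : 1 ≤ t := le_add_of_nonneg_left (div_pos hT (neg_pos.mpr hc)).le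
    have hct : T ≤ -c * t := by
      rw [mul_add, mul_div_cancel₀ _ (by linarith : -c ≠ 0)]; linarith
    have hsq : t * T ≤ -c * t ^ 2 := by nlinarith
    have := h t (by linarith)
    nlinarith [le_abs_self a, neg_abs_le a, le_abs_self b, neg_abs_le b, le_abs_self s,
      abs_nonneg a, abs_nonneg s]
  · by_contra! hb
    have := h ((|a| + |s| + 1) / b) (by positivity)
    rw [hc, mul_div_cancel₀ _ hb.ne'] at this
    linarith [neg_abs_le a, le_abs_self s]

lemma Matrix.PosDef.exists_mul_norm_sq_le {ι : Type*} [Fintype ι] {M : Matrix ι ι ℝ}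
    (hM : M.PosDef) : ∃ μ > 0, ∀ u : ι → ℝ, μ * ‖u‖ ^ 2 ≤ u ⬝ᵥ (M *ᵥ u) := by
  rcases subsingleton_or_nontrivial (ι → ℝ) with h | h
  · exact ⟨1, one_pos, fun u => by simp [Subsingleton.elim u 0]⟩
  have hq : Continuous fun u : ι → ℝ => u ⬝ᵥ (M *ᵥ u) :=
    continuous_id.dotProduct (continuous_const.matrix_mulVec continuous_id)
  obtain ⟨z, hz, hmin⟩ := (isCompact_sphere (0 : ι → ℝ) 1).exists_isMinOn
    (NormedSpace.sphere_nonempty.mpr zero_le_one) hq.continuousOn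
  have hz0 : z ≠ 0 := ne_zero_of_mem_unit_sphere ⟨z, hz⟩
  refine ⟨_, by simpa using hM.dotProduct_mulVec_pos hz0, fun u => ?_⟩
  rcases eq_or_ne u 0 with rfl | hu
  · simp
  have hnorm : 0 < ‖u‖ := norm_pos_iff.mpr hu
  have hmem : ‖u‖⁻¹ • u ∈ Metric.sphere (0 : ι → ℝ) 1 := by
    simp [norm_smul, hnorm.ne']
  have hle : z ⬝ᵥ (M *ᵥ z) ≤ ‖u‖⁻¹ * (‖u‖⁻¹ * u ⬝ᵥ (M *ᵥ u)) := by
    simpa only [mulVec_smul, smul_dotProduct, dotProduct_smul, smul_eq_mul] using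
      isMinOn_iff.mp hmin _ hmem
  calc z ⬝ᵥ (M *ᵥ z) * ‖u‖ ^ 2 ≤ ‖u‖⁻¹ * (‖u‖⁻¹ * u ⬝ᵥ (M *ᵥ u)) * ‖u‖ ^ 2 := by gcongr
    _ = u ⬝ᵥ (M *ᵥ u) := by field_simp

section ZMatrix

variable {k : ℕ} {M : Matrix (Fin k) (Fin k) ℝ}

lemma IsZmat.abs_dotProduct_mulVec_abs_le (hM : IsZmat M) (v : Fin k → ℝ) :
    |v| ⬝ᵥ (M *ᵥ |v|) ≤ v ⬝ᵥ (M *ᵥ v) := by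
  simp only [dot_mulVec_eq_sum_sum, Pi.abs_apply]
  refine Finset.sum_le_sum fun j _ => Finset.sum_le_sum fun i _ => ?_
  rcases eq_or_ne i j with rfl | hij
  · rw [mul_right_comm, abs_mul_abs_self, mul_right_comm]
  · have hv : v i * v j ≤ |v i| * |v j| := by rw [← abs_mul]; exact le_abs_self _
    nlinarith [hM i j hij]

lemma IsZmat.pos_of_irred (hM : IsZmat M) (hirr : IsIrred M) {w : Fin k → ℝ} (hw : 0 ≤ w)
    (hw0 : w ≠ 0) (hMw : ∀ i, w i = 0 → 0 ≤ (M *ᵥ w) i) (i : Fin k) : 0 < w i := by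
  classical
  by_contra! hi
  set β := Finset.univ.filter fun j => w j = 0
  have hβ : β.Nonempty := ⟨i, by simp [β, le_antisymm hi (hw i)]⟩
  have hβ' : β ≠ Finset.univ := fun h =>
    hw0 (funext fun j => by simpa [β] using Finset.eq_univ_iff_forall.mp h j)
  obtain ⟨b, hb, a, ha, hba⟩ := hirr β hβ hβ'
  simp only [β, Finset.mem_filter, Finset.mem_univ, true_and, Finset.mem_compl] at hb ha
  have hab : a ≠ b := by rintro rfl; exact ha hb
  have hneg : (M *ᵥ w) b < 0 := by
    rw [mulVec, dotProduct, ← Finset.sum_const_zero]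
    refine Finset.sum_lt_sum (fun j _ => ?_) ⟨a, Finset.mem_univ a, ?_⟩
    · rcases eq_or_ne b j with rfl | hbj
      · simp [hb]
      · exact mul_nonpos_of_nonpos_of_nonneg (hM b j hbj) (hw j)
    · exact mul_neg_of_neg_of_pos ((hM b a hab.symm).lt_of_ne hba) ((hw a).lt_of_ne' ha)
  exact hneg.not_ge (hMw b hb)

end ZMatrix

lemma Matrix.IsSymm.dotProduct_mulVec_comm {ι R : Type*} [Fintype ι] [CommSemiring R]
    {M : Matrix ι ι R} (hM : M.IsSymm) (u v : ι → R) : u ⬝ᵥ (M *ᵥ v) = v ⬝ᵥ (M *ᵥ u) := by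
  rw [dotProduct_mulVec, ← mulVec_transpose, hM.eq, dotProduct_comm]

section PowerFlow

variable {n : ℕ} {Y : Matrix (Fin n) (Fin n) ℝ} {Vs l : Fin n → ℝ}

lemma hmat_apply (Y : Matrix (Fin n) (Fin n) ℝ) (l : Fin n → ℝ) (i j : Fin n) :
    hmat Y l i j = (l i + l j) / 2 * Y i j := by
  simp only [hmat, Matrix.smul_apply, Matrix.add_apply, diagonal_mul, mul_diagonal, smul_eq_mul]
  ring

lemma Matrix.IsSymm.hmat (hY : Y.IsSymm) (l : Fin n → ℝ) : (hmat Y l).IsSymm :=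
  IsSymm.ext fun i j => by rw [hmat_apply, hmat_apply, hY.apply, add_comm]

lemma IsZmat.hmat (hZ : IsZmat Y) (hl : ∀ i, 0 ≤ l i) : IsZmat (hmat Y l) := fun i j hij => by
  rw [hmat_apply]
  exact mul_nonpos_of_nonneg_of_nonpos (by linarith [hl i, hl j]) (hZ i j hij)

lemma IsIrred.hmat (hirr : IsIrred Y) (hl : ∀ i, 0 < l i) : IsIrred (hmat Y l) := by
  intro α hα hα'
  obtain ⟨i, hi, j, hj, hij⟩ := hirr α hα hα'
  refine ⟨i, hi, j, hj, ?_⟩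
  rw [hmat_apply]
  exact mul_ne_zero (by linarith [hl i, hl j]) hij

lemma qnorm_eq (hY : Y.IsSymm) (l x : Fin n → ℝ) :
    qnorm Y l x = x ⬝ᵥ (diagonal l *ᵥ (Y *ᵥ x)) := by
  have hswap : x ⬝ᵥ (Y *ᵥ (diagonal l *ᵥ x)) = x ⬝ᵥ (diagonal l *ᵥ (Y *ᵥ x)) := by
    rw [hY.dotProduct_mulVec_comm]
    simp only [dotProduct, mulVec_diagonal]
    exact Finset.sum_congr rfl fun i _ => by ring
  simp only [qnorm, hmat, smul_mulVec, add_mulVec, ← mulVec_mulVec, dotProduct_smul,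
    dotProduct_add, hswap, smul_eq_mul]
  ring

lemma dotProduct_Pc (hY : Y.IsSymm) (x : Fin n → ℝ) :
    l ⬝ᵥ Pc Y Vs x = x ⬝ᵥ (diagonal l *ᵥ (Y *ᵥ Vs)) - qnorm Y l x := by
  have hcomm : ∀ u, l ⬝ᵥ (diagonal x *ᵥ u) = x ⬝ᵥ (diagonal l *ᵥ u) := fun u => by
    simp only [dotProduct, mulVec_diagonal, mul_left_comm]
  rw [Pc, hcomm, qnorm_eq hY, mulVec_sub, mulVec_sub, dotProduct_sub]

lemma qnorm_add_smul (hY : Y.IsSymm) (u v : Fin n → ℝ) (t : ℝ) :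
    qnorm Y l (u + t • v)
      = qnorm Y l u + 2 * t * (u ⬝ᵥ (hmat Y l *ᵥ v)) + t ^ 2 * qnorm Y l v := by
  simp only [qnorm, mulVec_add, mulVec_smul, dotProduct_add, add_dotProduct, dotProduct_smul,
    smul_dotProduct, smul_eq_mul, (hY.hmat l).dotProduct_mulVec_comm v u]
  ring

lemma hmat_mulVec_phiv (hh : (hmat Y l).PosDef) :
    hmat Y l *ᵥ phiv Y Vs l = (1 / 2 : ℝ) • (diagonal l *ᵥ (Y *ᵥ Vs)) := by
  rw [phiv, mulVec_smul, mulVec_mulVec, mul_nonsing_inv _ (isUnit_iff_ne_zero.mpr hh.det_pos.ne'),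
    one_mulVec]

lemma dotProduct_sub_qnorm_eq (hY : Y.IsSymm) (hh : (hmat Y l).PosDef) (x : Fin n → ℝ) :
    x ⬝ᵥ (diagonal l *ᵥ (Y *ᵥ Vs)) - qnorm Y l x
      = qnorm Y l (phiv Y Vs l) - qnorm Y l (x - phiv Y Vs l) := by
  have hx := qnorm_add_smul (l := l) hY (phiv Y Vs l) (x - phiv Y Vs l) 1
  rw [one_smul, add_sub_cancel, (hY.hmat l).dotProduct_mulVec_comm, hmat_mulVec_phiv hh] at hx
  rw [hx, qnorm, hmat_mulVec_phiv hh]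
  simp only [dotProduct_smul, sub_dotProduct, smul_eq_mul]
  ring

@[simp]
lemma qnorm_zero (Y : Matrix (Fin n) (Fin n) ℝ) (l : Fin n → ℝ) : qnorm Y l 0 = 0 := by
  simp [qnorm]

lemma qnorm_pos (hh : (hmat Y l).PosDef) {x : Fin n → ℝ} (hx : x ≠ 0) : 0 < qnorm Y l x := by
  have h := hh.dotProduct_mulVec_pos hx
  rwa [star_trivial] at h

lemma qnorm_nonneg (hh : (hmat Y l).PosDef) (x : Fin n → ℝ) : 0 ≤ qnorm Y l x := by
  have h := hh.posSemidef.dotProduct_mulVec_nonneg x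
  rwa [star_trivial] at h

lemma phiv_nonneg (hY : Y.IsSymm) (hZ : IsZmat Y) (hh : (hmat Y l).PosDef) (hl : ∀ i, 0 ≤ l i)
    (hInn : ∀ i, 0 ≤ (Y *ᵥ Vs) i) : 0 ≤ phiv Y Vs l := by
  set φ := phiv Y Vs l
  have hc : ∀ i, 0 ≤ (diagonal l *ᵥ (Y *ᵥ Vs)) i := fun i => by
    rw [mulVec_diagonal]; exact mul_nonneg (hl i) (hInn i)
  have hlin : φ ⬝ᵥ (diagonal l *ᵥ (Y *ᵥ Vs)) ≤ |φ| ⬝ᵥ (diagonal l *ᵥ (Y *ᵥ Vs)) :=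
    Finset.sum_le_sum fun i _ => mul_le_mul_of_nonneg_right (le_abs_self _) (hc i)
  have hquad : qnorm Y l |φ| ≤ qnorm Y l φ := (hZ.hmat hl).abs_dotProduct_mulVec_abs_le φ
  have hgap : qnorm Y l (|φ| - φ) ≤ 0 := by
    have h1 := dotProduct_sub_qnorm_eq (Vs := Vs) hY hh |φ|
    have h2 := dotProduct_sub_qnorm_eq (Vs := Vs) hY hh φ
    rw [sub_self, qnorm_zero] at h2
    linarith
  have habs : |φ| - φ = 0 := by
    by_contra hne
    exact hgap.not_gt (qnorm_pos hh hne)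
  exact sub_eq_zero.mp habs ▸ abs_nonneg φ

lemma continuous_Pc (Y : Matrix (Fin n) (Fin n) ℝ) (Vs : Fin n → ℝ) : Continuous (Pc Y Vs) := by
  unfold Pc
  fun_prop

lemma Pc_mem_closure_Fset {x : Fin n → ℝ} (hx : 0 ≤ x) : Pc Y Vs x ∈ closure (Fset Y Vs) := by
  have hF : Fset Y Vs = Pc Y Vs '' univ.pi fun _ => Ioi 0 := by
    ext P; simp [Fset]
  rw [hF]
  refine image_closure_subset_closure_image (continuous_Pc Y Vs) ⟨x, ?_, rfl⟩
  rw [closure_pi_set]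
  exact fun i _ => by simpa [closure_Ioi] using hx i

lemma Pc_phiv_mem_closure_Fset (hY : Y.IsSymm) (hZ : IsZmat Y) (hInn : ∀ i, 0 ≤ (Y *ᵥ Vs) i)
    (hh : (hmat Y l).PosDef) (hl : ∀ i, 0 ≤ l i) :
    Pc Y Vs (phiv Y Vs l) ∈ closure (Fset Y Vs) :=
  Pc_mem_closure_Fset (phiv_nonneg hY hZ hh hl hInn)

lemma isClosed_halfspace (ν : Fin n → ℝ) (a : ℝ) : IsClosed {y : Fin n → ℝ | ν ⬝ᵥ y ≤ a} :=
  isClosed_le (continuous_const.dotProduct continuous_id) continuous_const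

variable {s : ℝ}

lemma ray_coeff_signs_of_Fset_subset (hY : Y.IsSymm) (hF : Fset Y Vs ⊆ {y | l ⬝ᵥ y ≤ s})
    {u v : Fin n → ℝ} (hu : ∀ i, 0 < u i) (hv : 0 ≤ v) :
    0 ≤ qnorm Y l v ∧
      (qnorm Y l v = 0 → v ⬝ᵥ (diagonal l *ᵥ (Y *ᵥ Vs)) ≤ 2 * (u ⬝ᵥ (hmat Y l *ᵥ v))) := by
  suffices h : ∀ t : ℝ, 0 ≤ t → (u ⬝ᵥ (diagonal l *ᵥ (Y *ᵥ Vs)) - qnorm Y l u)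
      + (v ⬝ᵥ (diagonal l *ᵥ (Y *ᵥ Vs)) - 2 * (u ⬝ᵥ (hmat Y l *ᵥ v))) * t
      - qnorm Y l v * t ^ 2 ≤ s by
    obtain ⟨hq, hlin⟩ := coeff_signs_of_forall_quadratic_le h
    exact ⟨hq, fun h0 => sub_nonpos.mp (hlin h0)⟩
  intro t ht
  have hpos : ∀ i, 0 < (u + t • v) i := fun i => by
    simpa using add_pos_of_pos_of_nonneg (hu i) (mul_nonneg ht (hv i))
  have h : l ⬝ᵥ Pc Y Vs (u + t • v) ≤ s := hF ⟨u + t • v, hpos, rfl⟩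
  rw [dotProduct_Pc hY, qnorm_add_smul hY, add_dotProduct, smul_dotProduct,
    smul_eq_mul] at h
  linarith

lemma pos_of_Fset_subset (hPD : Y.PosDef) (hZ : IsZmat Y) (hirr : IsIrred Y)
    (hVs : ∀ i, 0 < Vs i) (hl1 : ∑ i, |l i| = 1) (hF : Fset Y Vs ⊆ {y | l ⬝ᵥ y ≤ s})
    (i : Fin n) : 0 < l i := by
  have hY : Y.IsSymm := isHermitian_iff_isSymm.mp hPD.isHermitian
  have hray := fun j => ray_coeff_signs_of_Fset_subset hY hF hVs (Pi.single_nonneg.mpr zero_le_one)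
    (v := Pi.single j 1)
  have hq : ∀ j, qnorm Y l (Pi.single j 1) = l j * Y j j := fun j => by
    simp [qnorm, hmat_apply]
  have hl : ∀ j, 0 ≤ l j := fun j =>
    nonneg_of_mul_nonneg_left ((hq j).symm ▸ (hray j).1) (hPD.diag_pos)
  have hflow : ∀ j, l j * Vs j = 0 → 0 ≤ (Y *ᵥ (l * Vs)) j := fun j hj => by
    have hlj : l j = 0 := (mul_eq_zero.mp hj).resolve_right (hVs j).ne'
    have h := (hray j).2 (by rw [hq, hlj, zero_mul])
    rw [single_one_dotProduct, (hY.hmat l).dotProduct_mulVec_comm, single_one_dotProduct,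
      mulVec_diagonal, hlj, zero_mul] at h
    simp only [mulVec, dotProduct, hmat_apply, hlj, zero_add, Finset.mul_sum] at h
    refine h.trans_eq (Finset.sum_congr rfl fun k _ => ?_)
    simp only [Pi.mul_apply]
    ring
  have hne : l * Vs ≠ 0 := fun h0 => by
    have : ∀ j, l j = 0 := fun j => (mul_eq_zero.mp (congrFun h0 j)).resolve_right (hVs j).ne'
    simp [this] at hl1
  have := hZ.pos_of_irred hirr (fun j => mul_nonneg (hl j) (hVs j).le) hne hflow i
  exact pos_of_mul_pos_left this (hVs i).le

lemma hmat_posDef_of_Fset_subset (hY : Y.IsSymm) (hZ : IsZmat Y) (hirr : IsIrred Y)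
    (hInn : ∀ i, 0 ≤ (Y *ᵥ Vs) i) (hIne : Y *ᵥ Vs ≠ 0) (hl : ∀ i, 0 < l i)
    (hF : Fset Y Vs ⊆ {y | l ⬝ᵥ y ≤ s}) : (hmat Y l).PosDef := by
  have hray := fun v (hv : 0 ≤ v) =>
    ray_coeff_signs_of_Fset_subset hY hF (u := 1) (fun _ => one_pos) hv
  have hZh := hZ.hmat fun i => (hl i).le
  have hherm : (hmat Y l).IsHermitian := isHermitian_iff_isSymm.mpr (hY.hmat l)
  have habs (v : Fin n → ℝ) : qnorm Y l |v| ≤ qnorm Y l v := hZh.abs_dotProduct_mulVec_abs_le v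
  have hpsd : (hmat Y l).PosSemidef := .of_dotProduct_mulVec_nonneg hherm fun v => by
    rw [star_trivial]
    exact (hray |v| (abs_nonneg v)).1.trans (habs v)
  refine .of_dotProduct_mulVec_pos hherm fun v hv => ?_
  rw [star_trivial]
  by_contra! hq
  set w := |v|
  have hw : qnorm Y l w = 0 := le_antisymm ((habs v).trans hq) (hray w (abs_nonneg v)).1
  have hker : hmat Y l *ᵥ w = 0 :=
    (hpsd.dotProduct_mulVec_zero_iff w).mp (by rw [star_trivial]; exact hw)
  have hwpos : ∀ i, 0 < w i := hZh.pos_of_irred (hirr.hmat hl) (abs_nonneg v)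
    (by simpa [w] using hv) fun i _ => by simp [hker]
  have hc : 0 < w ⬝ᵥ (diagonal l *ᵥ (Y *ᵥ Vs)) := by
    obtain ⟨j, hj⟩ := Function.ne_iff.mp hIne
    refine Finset.sum_pos' (fun i _ => ?_) ⟨j, Finset.mem_univ j, ?_⟩
    · rw [mulVec_diagonal]
      exact mul_nonneg (hwpos i).le (mul_nonneg (hl i).le (hInn i))
    · rw [mulVec_diagonal]
      exact mul_pos (hwpos j) (mul_pos (hl j) ((hInn j).lt_of_ne' hj))
  have := (hray w (abs_nonneg v)).2 hw
  rw [hker, dotProduct_zero, mul_zero] at this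
  linarith

lemma dotProduct_Pc_eq_qnorm_sub (hY : Y.IsSymm) (hh : (hmat Y l).PosDef) (x : Fin n → ℝ) :
    l ⬝ᵥ Pc Y Vs x = qnorm Y l (phiv Y Vs l) - qnorm Y l (x - phiv Y Vs l) := by
  rw [dotProduct_Pc hY, dotProduct_sub_qnorm_eq hY hh]

lemma dotProduct_Pc_phiv (hY : Y.IsSymm) (hh : (hmat Y l).PosDef) :
    l ⬝ᵥ Pc Y Vs (phiv Y Vs l) = qnorm Y l (phiv Y Vs l) := by
  rw [dotProduct_Pc_eq_qnorm_sub hY hh, sub_self, qnorm_zero, sub_zero]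

lemma closure_range_Pc_subset (hY : Y.IsSymm) (hh : (hmat Y l).PosDef) :
    closure (range (Pc Y Vs)) ⊆ {y | l ⬝ᵥ y ≤ qnorm Y l (phiv Y Vs l)} := by
  refine closure_minimal ?_ (isClosed_halfspace l _)
  rintro _ ⟨x, rfl⟩
  exact (dotProduct_Pc_eq_qnorm_sub hY hh x).trans_le (sub_le_self _ (qnorm_nonneg hh _))

lemma eq_Pc_phiv_of_mem_closure (hY : Y.IsSymm) (hh : (hmat Y l).PosDef) {y : Fin n → ℝ}
    (hy : y ∈ closure (range (Pc Y Vs))) (hly : l ⬝ᵥ y = qnorm Y l (phiv Y Vs l)) :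
    y = Pc Y Vs (phiv Y Vs l) := by
  obtain ⟨P, hP, hPy⟩ := mem_closure_iff_seq_limit.mp hy
  choose x hx using hP
  obtain rfl : P = Pc Y Vs ∘ x := funext fun k => (hx k).symm
  obtain ⟨μ, hμ, hcoer⟩ := hh.exists_mul_norm_sq_le
  have hgap : Tendsto (fun k => (l ⬝ᵥ y - l ⬝ᵥ Pc Y Vs (x k)) / μ) atTop (𝓝 0) := by
    have hl : Continuous fun z : Fin n → ℝ => l ⬝ᵥ z := continuous_const.dotProduct continuous_id
    simpa using (tendsto_const_nhds (x := l ⬝ᵥ y)).sub ((hl.tendsto y).comp hPy) |>.div_const μ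
  have hsq : Tendsto (fun k => ‖x k - phiv Y Vs l‖ ^ 2) atTop (𝓝 0) := by
    refine squeeze_zero (fun _ => by positivity) (fun k => ?_) hgap
    rw [le_div_iff₀ hμ, dotProduct_Pc_eq_qnorm_sub hY hh, hly, sub_sub_cancel, mul_comm]
    exact hcoer _
  have hxφ : Tendsto x atTop (𝓝 (phiv Y Vs l)) := by
    rw [tendsto_iff_norm_sub_tendsto_zero]
    simpa using hsq.sqrt
  refine tendsto_nhds_unique hPy ?_
  exact ((continuous_Pc Y Vs).tendsto _).comp hxφ

variable {S : Set (Fin n → ℝ)}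

lemma supports_iff (hPD : Y.PosDef) (hZ : IsZmat Y) (hirr : IsIrred Y) (hVs : ∀ i, 0 < Vs i)
    (hInn : ∀ i, 0 ≤ (Y *ᵥ Vs) i) (hIne : Y *ᵥ Vs ≠ 0) (hl1 : ∑ i, |l i| = 1)
    (hFS : Fset Y Vs ⊆ S) (hSP : S ⊆ range (Pc Y Vs)) :
    Supports l s S ↔ l ∈ Lam1 Y ∧ s = qnorm Y l (phiv Y Vs l) := by
  have hY : Y.IsSymm := isHermitian_iff_isSymm.mp hPD.isHermitian
  have hmem {l : Fin n → ℝ} (hh : (hmat Y l).PosDef) (hl : ∀ i, 0 < l i) :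
      Pc Y Vs (phiv Y Vs l) ∈ closure S :=
    closure_mono hFS (Pc_phiv_mem_closure_Fset hY hZ hInn hh fun i => (hl i).le)
  constructor
  · rintro ⟨hsub, y, hyS, hys⟩
    have hF := hFS.trans hsub
    have hl := pos_of_Fset_subset hPD hZ hirr hVs hl1 hF
    have hh := hmat_posDef_of_Fset_subset hY hZ hirr hInn hIne hl hF
    refine ⟨⟨hh, hl, ?_⟩, le_antisymm ?_ ?_⟩
    · simpa only [abs_of_pos (hl _)] using hl1
    · exact hys ▸ closure_range_Pc_subset hY hh (closure_mono hSP hyS)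
    · rw [← dotProduct_Pc_phiv (Vs := Vs) hY hh]
      exact closure_minimal hsub (isClosed_halfspace l s) (hmem hh hl)
  · rintro ⟨⟨hh, hl, -⟩, rfl⟩
    exact ⟨hSP.trans (subset_closure.trans (closure_range_Pc_subset hY hh)),
      _, hmem hh hl, dotProduct_Pc_phiv hY hh⟩

lemma closure_inter_eq_singleton (hPD : Y.PosDef) (hZ : IsZmat Y) (hInn : ∀ i, 0 ≤ (Y *ᵥ Vs) i)
    (hFS : Fset Y Vs ⊆ S) (hSP : S ⊆ range (Pc Y Vs)) (hl : l ∈ Lam1 Y)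
    (hs : s = qnorm Y l (phiv Y Vs l)) :
    closure S ∩ {y | l ⬝ᵥ y = s} = {Pc Y Vs (phiv Y Vs l)} := by
  obtain ⟨hh, hl, -⟩ := hl
  have hY : Y.IsSymm := isHermitian_iff_isSymm.mp hPD.isHermitian
  subst hs
  refine Subset.antisymm (fun y ⟨hyS, hys⟩ => ?_) ?_
  · exact eq_Pc_phiv_of_mem_closure hY hh (closure_mono hSP hyS) hys
  · rintro _ rfl
    exact ⟨closure_mono hFS (Pc_phiv_mem_closure_Fset hY hZ hInn hh fun i => (hl i).le),
      dotProduct_Pc_phiv hY hh⟩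

end PowerFlow

theorem stmt_11_general (n : ℕ)
    (Y : Matrix (Fin n) (Fin n) ℝ)
    (hPD : Y.PosDef)
    (hZ : IsZmat Y)
    (hirr : IsIrred Y)
    (Vs : Fin n → ℝ) (hVs : ∀ i, 0 < Vs i)
    (hInn : ∀ i, 0 ≤ (Y *ᵥ Vs) i) (hIne : Y *ᵥ Vs ≠ 0)
    (l : Fin n → ℝ) (hl1 : ∑ i, |l i| = 1) (s : ℝ) :
    (Supports l s (Fset Y Vs) ↔ (l ∈ Lam1 Y ∧ s = qnorm Y l (phiv Y Vs l))) ∧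
    (Supports l s (Fset Y Vs) →
      closure (Fset Y Vs) ∩ {y | l ⬝ᵥ y = s} = {Pc Y Vs (phiv Y Vs l)}) ∧
    (Supports l s (Fset Y Vs) ↔ Supports l s (Set.range (Pc Y Vs))) ∧
    (Supports l s (Set.range (Pc Y Vs)) →
      closure (Set.range (Pc Y Vs)) ∩ {y | l ⬝ᵥ y = s} = {Pc Y Vs (phiv Y Vs l)}) := by
  have hFP : Fset Y Vs ⊆ range (Pc Y Vs) := fun _ ⟨x, _, hx⟩ => ⟨x, hx⟩
  have hF := supports_iff (s := s) hPD hZ hirr hVs hInn hIne hl1 subset_rfl hFP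
  have hP := supports_iff (s := s) hPD hZ hirr hVs hInn hIne hl1 hFP subset_rfl
  refine ⟨hF, fun h => ?_, hF.trans hP.symm, fun h => ?_⟩
  · exact closure_inter_eq_singleton hPD hZ hInn subset_rfl hFP (hF.mp h).1 (hF.mp h).2
  · exact closure_inter_eq_singleton hPD hZ hInn hFP subset_rfl (hP.mp h).1 (hP.mp h).2

theorem stmt_11 (n : ℕ) (hn : 1 ≤ n)
    (Y : Matrix (Fin n) (Fin n) ℝ)
    (hPD : Y.PosDef)
    (hZ : IsZmat Y)
    (hirr : IsIrred Y)
    (Vs : Fin n → ℝ) (hVs : ∀ i, 0 < Vs i)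
    (hInn : ∀ i, 0 ≤ (Y *ᵥ Vs) i) (hIne : Y *ᵥ Vs ≠ 0)
    (l : Fin n → ℝ) (hl1 : ∑ i, |l i| = 1) (s : ℝ) :
    (Supports l s (Fset Y Vs) ↔ (l ∈ Lam1 Y ∧ s = qnorm Y l (phiv Y Vs l))) ∧
    (Supports l s (Fset Y Vs) →
      closure (Fset Y Vs) ∩ {y | l ⬝ᵥ y = s} = {Pc Y Vs (phiv Y Vs l)}) ∧
    (Supports l s (Fset Y Vs) ↔ Supports l s (Set.range (Pc Y Vs))) ∧
    (Supports l s (Set.range (Pc Y Vs)) →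
      closure (Set.range (Pc Y Vs)) ∩ {y | l ⬝ᵥ y = s} = {Pc Y Vs (phiv Y Vs l)}) :=
  stmt_11_general n Y hPD hZ hirr Vs hVs hInn hIne l hl1 s
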